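/- With G_m^d defined by the recursion (G_1^d of size d+1; |G_m^d| = 2|G_{m/2}^{d-1}| for m even; |G_m^d| = |G_{(m-1)/2}^{d-1}| + |G_{(m+1)/2}^{d-1}| for m odd), the size satisfies the closed form |G_m^d| = m(d − κ) + 2^{κ+1} − m, where κ = ⌊log₂ m⌋, for all d ≥ 1 and 1 ≤ m ≤ 2^{d-1}. -/

import Mathlib

/-- Vertices of the hypercube `Q_d`. -/
abbrev Vtx (d : ℕ) := Fin d → ZMod 2

/-- The `i`-th standard basis vector of `(ZMod 2)^d`. -/
def eV {d : ℕ} (i : Fin d) : Vtx d := Pi.single i 1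

/-- The number of edges of `Q_d` in direction `i` whose two endpoints both lie
in `S`, i.e. the number of pairs `{t, t ⊕ e_i} ⊆ S`. -/
def edgeCount {d : ℕ} (S : Finset (Vtx d)) (i : Fin d) : ℕ :=
  (S.filter fun t => t i = 0 ∧ t + eV i ∈ S).card

/-- `S ⊆ Q_d` is a `(d,m)`-edge equitable design: exactly `m` edges of the
induced subgraph in each direction. -/
def Equitable {d : ℕ} (S : Finset (Vtx d)) (m : ℕ) : Prop :=
  ∀ i : Fin d, edgeCount S i = m

/-- Embedding of `Q_d` into `Q_{d+1}` fixing the last coordinate to `0`. -/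
def emb {d : ℕ} (t : Vtx d) : Vtx (d + 1) := Fin.snoc t 0

/-- Embedding of `Q_d` into `Q_{d+1}` followed by the reflection `⊕ e_1 ⊕ e_d`
(multiplication by `X_1 X_d`). -/
def embS {d : ℕ} (t : Vtx d) : Vtx (d + 1) := Fin.snoc t 0 + eV 0 + eV (Fin.last d)

/-- The recursively defined designs `G_m^d`:
`G_1^d = {0, e_1, …, e_d}`; for even `m`, `G_m^d = G_{m/2}^{d-1} ∪ (G_{m/2}^{d-1} ⊕ e_1 ⊕ e_d)`;
for odd `m`, `G_m^d = G_{(m-1)/2}^{d-1} ∪ (G_{(m+1)/2}^{d-1} ⊕ e_1 ⊕ e_d)`. -/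
def G : (d : ℕ) → ℕ → Finset (Vtx d)
  | 0, _ => ∅
  | _ + 1, 0 => ∅
  | d + 1, 1 => insert (0 : Vtx (d + 1)) (Finset.univ.image fun i : Fin (d + 1) => eV i)
  | d + 1, m + 2 =>
    if (m + 2) % 2 = 0 then
      ((G d ((m + 2) / 2)).image emb) ∪ ((G d ((m + 2) / 2)).image embS)
    else
      ((G d ((m + 2 - 1) / 2)).image emb) ∪ ((G d ((m + 2 + 1) / 2)).image embS)

/-
The recursion makes `|G_m^{d+1}| = |G_{⌊m/2⌋}^d| + |G_{⌈m/2⌉}^d|` for `m ≥ 2`, since the two halves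
are copies of lower designs separated by the last coordinate. The closed form
`F_d(m) = m (d - κ) + 2^{κ+1}` for `|G_m^{d+1}|` satisfies the same recursion: it has increments
`F_d(m+1) - F_d(m) = d - ⌊log₂ m⌋`, which gives `F_d(2a) = 2 F_d(a)` and
`F_d(2a+1) = F_d(a) + F_d(a+1)` once `⌊log₂ (2a)⌋ = ⌊log₂ (2a+1)⌋ = ⌊log₂ a⌋ + 1` is used.
-/

lemma eV_injective {d : ℕ} : Function.Injective (eV (d := d)) := by
  intro i j h
  by_contra hne
  have h2 := congrFun h i
  rw [eV, eV, Pi.single_eq_same, Pi.single_eq_of_ne hne] at h2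
  exact one_ne_zero h2

lemma emb_injective {d : ℕ} : Function.Injective (emb (d := d)) := by
  intro a b h
  simpa [emb, Fin.init_snoc] using congrArg Fin.init h

lemma embS_injective {d : ℕ} : Function.Injective (embS (d := d)) :=
  fun _ _ h => emb_injective (add_right_cancel (add_right_cancel h))

lemma emb_last {d : ℕ} (t : Vtx d) : emb t (Fin.last d) = 0 := by
  simp [emb]

lemma embS_last {d : ℕ} (hd : d ≠ 0) (t : Vtx d) : embS t (Fin.last d) = 1 := by
  have hne : Fin.last d ≠ 0 := by simpa [Fin.ext_iff] using hd
  simp [embS, eV, Pi.single_eq_of_ne hne]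

lemma disjoint_image_emb_image_embS {d : ℕ} (hd : d ≠ 0) (A B : Finset (Vtx d)) :
    Disjoint (A.image emb) (B.image embS) := by
  simp only [Finset.disjoint_left, Finset.mem_image]
  rintro _ ⟨t, -, rfl⟩ ⟨s, -, hs⟩
  have := congrFun hs (Fin.last d)
  rw [embS_last hd, emb_last] at this
  exact one_ne_zero this

lemma card_image_emb_union_image_embS {d : ℕ} (hd : d ≠ 0) (A B : Finset (Vtx d)) :
    (A.image emb ∪ B.image embS).card = A.card + B.card := by
  rw [Finset.card_union_of_disjoint (disjoint_image_emb_image_embS hd A B),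
    Finset.card_image_of_injective _ emb_injective,
    Finset.card_image_of_injective _ embS_injective]

lemma card_G_succ_one (d : ℕ) : (G (d + 1) 1).card = d + 2 := by
  rw [G, Finset.card_insert_of_notMem, Finset.card_image_of_injective _ eV_injective]
  · simp
  · simp only [Finset.mem_image, not_exists, not_and]
    intro i _ hi
    simpa [eV] using congrFun hi i

lemma card_G_succ_of_two_le {d m : ℕ} (hd : d ≠ 0) (hm : 2 ≤ m) :
    (G (d + 1) m).card = (G d (m / 2)).card + (G d ((m + 1) / 2)).card := by
  obtain ⟨m, rfl⟩ : ∃ k, m = k + 2 := ⟨m - 2, by omega⟩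
  rw [G]
  split_ifs
  · rw [card_image_emb_union_image_embS hd, show (m + 2 + 1) / 2 = (m + 2) / 2 by omega]
  · rw [card_image_emb_union_image_embS hd, show (m + 2 - 1) / 2 = (m + 2) / 2 by omega]

/-- The closed form of `|G_m^{d+1}|` (note the shift of `d`); for `m ≤ 2^d` it equals the
paper's `m (d + 1 - κ) + 2^{κ+1} - m` without its truncated subtraction. -/
def sizeFormula (d m : ℕ) : ℕ := m * (d - Nat.log 2 m) + 2 ^ (Nat.log 2 m + 1)

lemma sizeFormula_one (d : ℕ) : sizeFormula d 1 = d + 2 := by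
  simp [sizeFormula]

lemma sizeFormula_succ {d m : ℕ} (hm : 1 ≤ m) (hmd : m < 2 ^ d) :
    sizeFormula d (m + 1) = sizeFormula d m + (d - Nat.log 2 m) := by
  set k := Nat.log 2 m with hk
  have hkd : k < d := Nat.log_lt_of_lt_pow (by omega) hmd
  have hlo : 2 ^ k ≤ m + 1 := (Nat.pow_log_le_self 2 (by omega)).trans (Nat.le_succ m)
  have hhi : m + 1 ≤ 2 ^ (k + 1) := Nat.lt_pow_succ_log_self (by norm_num) m
  obtain ⟨e, rfl⟩ : ∃ e, d = k + e + 1 := ⟨d - k - 1, by omega⟩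
  unfold sizeFormula
  rcases hhi.eq_or_lt with hpow | hlt
  · have hlog : Nat.log 2 (m + 1) = k + 1 := by rw [hpow, Nat.log_pow (by norm_num)]
    rw [hlog, ← hk, pow_succ, ← hpow, show k + e + 1 - (k + 1) = e by omega,
      show k + e + 1 - k = e + 1 by omega]
    ring
  · rw [Nat.log_eq_of_pow_le_of_lt_pow hlo hlt, ← hk]
    ring

lemma sizeFormula_halves {d m : ℕ} (hm : 2 ≤ m) (hmd : m ≤ 2 ^ (d + 1)) :
    sizeFormula (d + 1) m = sizeFormula d (m / 2) + sizeFormula d ((m + 1) / 2) := by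
  have hlog := Nat.log_of_one_lt_of_le (by norm_num) hm
  rcases Nat.even_or_odd' m with ⟨a, rfl | rfl⟩
  · rw [show (2 * a + 1) / 2 = a by omega]
    unfold sizeFormula
    rw [hlog, Nat.add_sub_add_right, show 2 * a / 2 = a by omega]
    ring
  · rw [show (2 * a + 1 + 1) / 2 = a + 1 by omega,
      sizeFormula_succ (d := d) (m := a) (by omega) (by omega)]
    unfold sizeFormula
    rw [hlog, Nat.add_sub_add_right, show (2 * a + 1) / 2 = a by omega]
    ring

lemma card_G_succ {d m : ℕ} (hm : 1 ≤ m) (hmd : m ≤ 2 ^ d) :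
    (G (d + 1) m).card = sizeFormula d m := by
  induction d generalizing m with
  | zero =>
    obtain rfl : m = 1 := by simp at hmd; omega
    rw [card_G_succ_one, sizeFormula_one]
  | succ d ih =>
    rcases hm.eq_or_lt with rfl | hm2
    · rw [card_G_succ_one, sizeFormula_one]
    · have hpow : 2 ^ (d + 1) = 2 * 2 ^ d := by ring
      rw [card_G_succ_of_two_le (by omega) hm2, ih (by omega) (by omega), ih (by omega) (by omega),
        sizeFormula_halves hm2 hmd]

theorem stmt12 (d m : ℕ) (hd : 1 ≤ d) (hm : 1 ≤ m) (hm2 : m ≤ 2 ^ (d - 1)) :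
    (G d m).card = m * (d - Nat.log 2 m) + 2 ^ (Nat.log 2 m + 1) - m := by
  obtain ⟨d, rfl⟩ : ∃ d', d = d' + 1 := ⟨d - 1, by omega⟩
  rw [Nat.add_sub_cancel] at hm2
  have hlog : Nat.log 2 m ≤ d := (Nat.log_mono_right hm2).trans (Nat.log_pow (by norm_num) d).le
  rw [card_G_succ hm hm2, sizeFormula, show d + 1 - Nat.log 2 m = d - Nat.log 2 m + 1 by omega,
    mul_add_one]
  have := (Nat.lt_pow_succ_log_self (by norm_num : 1 < 2) m).le
  omega
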